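/- Consider the map Q : ℝ^{2n} → ℝ⁴ given by Q(x, r) = (∑ᵢ xᵢ − 2π, ∑ᵢ rᵢ r_{i+1} sin xᵢ − n sin(2π/n), ∑ᵢ rᵢ cos(∑_{k<i} x_k), ∑ᵢ rᵢ sin(∑_{k<i} x_k)) with indices mod n, n ≥ 5. At the point (x*, r*) = (2π/n, …, 2π/n, 1, …, 1), the derivative DQ(x*, r*) : ℝ^{2n} → ℝ⁴ is surjective; hence Q⁻¹(0) is a (2n−4)-dimensional C^∞ submanifold of ℝ^{2n} in a neighborhood of (x*, r*). -/

import Mathlib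

/-!
At the regular polygon, perturbing only the radii along the discrete Fourier modes `1`,
`cos (2π i / n)` and `sin (2π i / n)` moves `Q` by nonzero multiples of the last three
coordinate vectors of `ℝ⁴` (orthogonality of these modes needs `n ≥ 3`), while increasing every
angle by the same amount moves the first coordinate by `n`. So `DQ(x*, r*)` is onto `ℝ⁴`, and
rank–nullity gives the kernel dimension `2n - 4`.
-/

open Real Finset

/-- The constraint map defining the polygonal manifold `M(n, α)`: angles sum to `2π`,
area equals that of the regular `n`-gon inscribed in the unit circle, and the
barycenter of the vertices is the origin. -/
noncomputable def Qmap (n : ℕ) [NeZero n] (p : (Fin n → ℝ) × (Fin n → ℝ)) : Fin 4 → ℝ :=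
  ![∑ i, p.1 i - 2 * π,
    ∑ i, p.2 i * p.2 (i + 1) * Real.sin (p.1 i) - n * Real.sin (2 * π / n),
    ∑ i, p.2 i * Real.cos (∑ k ∈ Finset.univ.filter (fun k : Fin n => (k : ℕ) < (i : ℕ)), p.1 k),
    ∑ i, p.2 i * Real.sin (∑ k ∈ Finset.univ.filter (fun k : Fin n => (k : ℕ) < (i : ℕ)), p.1 k)]

theorem LinearMap.surjective_of_single_mem_range {K M ι : Type*} [Field K] [AddCommGroup M]
    [Module K M] [Fintype ι] [DecidableEq ι] (f : M →ₗ[K] ι → K) (j : ι)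
    (hsingle : ∀ k ≠ j, ∃ c ≠ 0, Pi.single k c ∈ range f) (v : M) (hv : f v j ≠ 0) :
    Function.Surjective f := by
  have hscale {k : ι} {c : K} (hc : c ≠ 0) (hk : Pi.single k c ∈ range f) (x : K) :
      Pi.single k x ∈ range f := by
    convert (range f).smul_mem (x / c) hk using 1
    rw [← Pi.single_smul', smul_eq_mul, div_mul_cancel₀ x hc]
  have hj : Pi.single j (f v j) ∈ range f := by
    have hsplit : Pi.single j (f v j) = f v - ∑ k ∈ univ.erase j, Pi.single k (f v k) := by
      rw [eq_sub_iff_add_eq, add_sum_erase univ (fun k => Pi.single k (f v k)) (mem_univ j),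
        Finset.univ_sum_single]
    rw [hsplit]
    refine sub_mem (mem_range_self f v) (sum_mem fun k hk => ?_)
    obtain ⟨c, hc, hmem⟩ := hsingle k (ne_of_mem_erase hk)
    exact hscale hc hmem _
  rw [← range_eq_top, Submodule.eq_top_iff']
  intro y
  rw [← Finset.univ_sum_single y]
  refine sum_mem fun k _ => ?_
  obtain rfl | hk := eq_or_ne k j
  · exact hscale hv hj _
  · obtain ⟨c, hc, hmem⟩ := hsingle k hk
    exact hscale hc hmem _

open Complex in
theorem sum_exp_nat_mul_two_pi_div_eq_zero {n m : ℕ} (hm : m ≠ 0) (hmn : m < n) :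
    ∑ i : Fin n, exp (↑(m * ((i : ℕ) * (2 * π / n))) * I) = 0 := by
  have hζ := isPrimitiveRoot_exp n (by omega)
  have hne : exp (2 * π * I / n) ^ m - 1 ≠ 0 := sub_ne_zero.2 (hζ.pow_ne_one_of_pos_of_lt hm hmn)
  have hterm (i : ℕ) : exp (↑(m * (i * (2 * π / n))) * I) = (exp (2 * π * I / n) ^ m) ^ i := by
    rw [← Complex.exp_nat_mul, ← Complex.exp_nat_mul]; push_cast; ring_nf
  simp_rw [hterm]
  rw [Fin.sum_univ_eq_sum_range (fun i => (exp (2 * π * I / n) ^ m) ^ i)]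
  refine (mul_eq_zero_iff_right hne).1 ?_
  rw [geom_sum_mul, ← pow_mul, mul_comm m n, pow_mul, hζ.pow_eq_one, one_pow, sub_self]

theorem sum_cos_nat_mul_eq_zero {n m : ℕ} (hm : m ≠ 0) (hmn : m < n) :
    ∑ i : Fin n, cos (m * ((i : ℕ) * (2 * π / n))) = 0 := by
  have h := congrArg Complex.re (sum_exp_nat_mul_two_pi_div_eq_zero hm hmn)
  simpa only [Complex.re_sum, Complex.exp_ofReal_mul_I_re, Complex.zero_re] using h

theorem sum_sin_nat_mul_eq_zero {n m : ℕ} (hm : m ≠ 0) (hmn : m < n) :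
    ∑ i : Fin n, sin (m * ((i : ℕ) * (2 * π / n))) = 0 := by
  have h := congrArg Complex.im (sum_exp_nat_mul_two_pi_div_eq_zero hm hmn)
  simpa only [Complex.im_sum, Complex.exp_ofReal_mul_I_im, Complex.zero_im] using h

theorem sum_cos_mul_cos_eq_half {n : ℕ} (hn : 2 < n) :
    ∑ i : Fin n, cos ((i : ℕ) * (2 * π / n)) * cos ((i : ℕ) * (2 * π / n)) = n / 2 := by
  have h : ∑ i : Fin n, cos (2 * ((i : ℕ) * (2 * π / n))) = 0 := by
    exact_mod_cast sum_cos_nat_mul_eq_zero two_ne_zero hn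
  simp_rw [← sq, cos_sq, sum_add_distrib, ← sum_div, h]
  simp

theorem sum_sin_mul_sin_eq_half {n : ℕ} (hn : 2 < n) :
    ∑ i : Fin n, sin ((i : ℕ) * (2 * π / n)) * sin ((i : ℕ) * (2 * π / n)) = n / 2 := by
  have h : ∑ i : Fin n, cos (2 * ((i : ℕ) * (2 * π / n))) = 0 := by
    exact_mod_cast sum_cos_nat_mul_eq_zero two_ne_zero hn
  simp_rw [← sq, sin_sq_eq_half_sub, sum_sub_distrib, ← sum_div, h]
  simp

theorem sum_cos_mul_sin_eq_zero {n : ℕ} (hn : 2 < n) :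
    ∑ i : Fin n, cos ((i : ℕ) * (2 * π / n)) * sin ((i : ℕ) * (2 * π / n)) = 0 := by
  have h : ∑ i : Fin n, sin (2 * ((i : ℕ) * (2 * π / n))) = 0 := by
    exact_mod_cast sum_sin_nat_mul_eq_zero two_ne_zero hn
  simp_rw [sin_two_mul] at h
  rw [← mul_right_inj' (two_ne_zero (α := ℝ)), mul_sum, mul_zero, ← h]
  exact sum_congr rfl fun i _ => by ring

theorem LinearMap.finrank_ker_eq_sub_of_surjective {K V W : Type*} [Field K] [AddCommGroup V]
    [Module K V] [AddCommGroup W] [Module K W] [FiniteDimensional K V] (f : V →ₗ[K] W)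
    (hf : Function.Surjective f) :
    Module.finrank K (ker f) = Module.finrank K V - Module.finrank K W := by
  have hrank := finrank_range_add_finrank_ker f
  rw [range_eq_top.2 hf, finrank_top] at hrank
  omega

theorem fderiv_apply_eq_of_hasDerivAt_line {E ι : Type*} [NormedAddCommGroup E] [NormedSpace ℝ E]
    [Fintype ι] {f : E → ι → ℝ} {x : E} (hf : DifferentiableAt ℝ f x) (v : E) {j : ι} {d : ℝ}
    (h : HasDerivAt (fun t : ℝ => f (x + t • v) j) d 0) : fderiv ℝ f x v j = d :=
  (hasDerivAt_pi.1 (hf.hasFDerivAt.hasLineDerivAt v) j).unique h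

theorem sin_two_pi_div_ne_zero {n : ℕ} (hn : 2 < n) : sin (2 * π / n) ≠ 0 := by
  have hn' : (2 : ℝ) < n := by exact_mod_cast hn
  refine (sin_pos_of_pos_of_lt_pi (by positivity) ?_).ne'
  rw [div_lt_iff₀ (by positivity)]
  nlinarith [pi_pos]

noncomputable def regularPoint (n : ℕ) : (Fin n → ℝ) × (Fin n → ℝ) :=
  (fun _ => 2 * π / n, fun _ => 1)

variable {n : ℕ} [NeZero n]

theorem differentiable_Qmap : Differentiable ℝ (Qmap n) := by
  unfold Qmap
  refine differentiable_pi.2 fun j => ?_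
  fin_cases j <;> simp <;> fun_prop

theorem fderiv_Qmap_apply_zero (p v : (Fin n → ℝ) × (Fin n → ℝ)) :
    fderiv ℝ (Qmap n) p v 0 = ∑ i, v.1 i := by
  refine fderiv_apply_eq_of_hasDerivAt_line differentiable_Qmap.differentiableAt v ?_
  simp only [Qmap, Prod.fst_add, Prod.smul_fst, Pi.add_apply, Pi.smul_apply, smul_eq_mul,
    sum_add_distrib, ← mul_sum, Matrix.cons_val_zero]
  simpa using ((hasDerivAt_id 0).mul_const (∑ i, v.1 i)).const_add (∑ i, p.1 i) |>.sub_const (2 * π)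

theorem fderiv_Qmap_regularPoint_radial (w : Fin n → ℝ) :
    fderiv ℝ (Qmap n) (regularPoint n) (0, w) =
      ![0, (∑ i, (w i + w (i + 1))) * sin (2 * π / n),
        ∑ i, w i * cos ((i : ℕ) * (2 * π / n)),
        ∑ i, w i * sin ((i : ℕ) * (2 * π / n))] := by
  funext j
  fin_cases j
  · simp [fderiv_Qmap_apply_zero]
  all_goals refine fderiv_apply_eq_of_hasDerivAt_line differentiable_Qmap.differentiableAt _ ?_
  all_goals simp [Qmap, regularPoint, filter_gt_eq_Iio, Fin.card_Iio]
  · have h := HasDerivAt.fun_sum (u := univ) fun i _ =>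
      ((hasDerivAt_mul_const (x := 0) (w i)).const_add 1).mul
        ((hasDerivAt_mul_const (x := 0) (w (i + 1))).const_add 1) |>.mul_const (sin (2 * π / n))
    simpa [sum_mul] using h
  · have h := HasDerivAt.fun_sum (u := univ) fun i _ =>
      ((hasDerivAt_mul_const (x := 0) (w i)).const_add 1).mul_const (cos ((i : ℕ) * (2 * π / n)))
    simpa using h
  · have h := HasDerivAt.fun_sum (u := univ) fun i _ =>
      ((hasDerivAt_mul_const (x := 0) (w i)).const_add 1).mul_const (sin ((i : ℕ) * (2 * π / n)))
    simpa using h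

theorem fderiv_Qmap_regularPoint_radial_one (hn : 1 < n) :
    fderiv ℝ (Qmap n) (regularPoint n)
      (0, fun _ => 1) = Pi.single 1 (2 * n * sin (2 * π / n)) := by
  have hcos := sum_cos_nat_mul_eq_zero one_ne_zero hn
  have hsin := sum_sin_nat_mul_eq_zero one_ne_zero hn
  rw [fderiv_Qmap_regularPoint_radial]
  funext j
  fin_cases j <;> simp_all [two_mul]

theorem fderiv_Qmap_regularPoint_radial_cos (hn : 2 < n) :
    fderiv ℝ (Qmap n) (regularPoint n)
      (0, fun i => cos ((i : ℕ) * (2 * π / n))) = Pi.single 2 ((n : ℝ) / 2) := by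
  have hcos : ∑ i : Fin n, cos ((i : ℕ) * (2 * π / n)) = 0 := by
    simpa using sum_cos_nat_mul_eq_zero one_ne_zero (by omega : 1 < n)
  have hshift : ∑ i : Fin n, cos (((i + 1 : Fin n) : ℕ) * (2 * π / n)) = 0 :=
    (Equiv.sum_comp (Equiv.addRight 1) fun i : Fin n => cos ((i : ℕ) * (2 * π / n))).trans hcos
  rw [fderiv_Qmap_regularPoint_radial]
  funext j
  fin_cases j <;>
    simp [sum_add_distrib, hshift, hcos, sum_cos_mul_cos_eq_half hn, sum_cos_mul_sin_eq_zero hn]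

theorem fderiv_Qmap_regularPoint_radial_sin (hn : 2 < n) :
    fderiv ℝ (Qmap n) (regularPoint n)
      (0, fun i => sin ((i : ℕ) * (2 * π / n))) = Pi.single 3 ((n : ℝ) / 2) := by
  have hsin : ∑ i : Fin n, sin ((i : ℕ) * (2 * π / n)) = 0 := by
    simpa using sum_sin_nat_mul_eq_zero one_ne_zero (by omega : 1 < n)
  have hshift : ∑ i : Fin n, sin (((i + 1 : Fin n) : ℕ) * (2 * π / n)) = 0 :=
    (Equiv.sum_comp (Equiv.addRight 1) fun i : Fin n => sin ((i : ℕ) * (2 * π / n))).trans hsin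
  rw [fderiv_Qmap_regularPoint_radial]
  funext j
  fin_cases j <;> simp [sum_add_distrib, hshift, hsin, mul_comm (sin _),
    sum_cos_mul_sin_eq_zero hn, sum_sin_mul_sin_eq_half hn]

theorem Qmap_deriv_surjective (n : ℕ) [NeZero n] (hn : 5 ≤ n) :
    Function.Surjective
        (fderiv ℝ (Qmap n) ((fun _ => 2 * π / n, fun _ => 1) : (Fin n → ℝ) × (Fin n → ℝ))) ∧
    Module.finrank ℝ
        (LinearMap.ker
          (fderiv ℝ (Qmap n)
            ((fun _ => 2 * π / n, fun _ => 1) : (Fin n → ℝ) × (Fin n → ℝ))).toLinearMap)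
      = 2 * n - 4 := by
  change Function.Surjective (fderiv ℝ (Qmap n) (regularPoint n)) ∧
    Module.finrank ℝ (LinearMap.ker (fderiv ℝ (Qmap n) (regularPoint n)).toLinearMap) = 2 * n - 4
  set L := fderiv ℝ (Qmap n) (regularPoint n)
  have hn0 : (n : ℝ) ≠ 0 := NeZero.ne _
  have hsurj : Function.Surjective L := by
    refine L.toLinearMap.surjective_of_single_mem_range 0 ?_ (fun _ => 1, 0) ?_
    · intro k hk
      fin_cases k
      · exact absurd rfl hk
      · exact ⟨_, by simp [hn0, sin_two_pi_div_ne_zero (by omega : 2 < n)],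
          LinearMap.mem_range.2 ⟨_, fderiv_Qmap_regularPoint_radial_one (by omega)⟩⟩
      · exact ⟨_, by simp [hn0],
          LinearMap.mem_range.2 ⟨_, fderiv_Qmap_regularPoint_radial_cos (by omega)⟩⟩
      · exact ⟨_, by simp [hn0],
          LinearMap.mem_range.2 ⟨_, fderiv_Qmap_regularPoint_radial_sin (by omega)⟩⟩
    · simp [L, fderiv_Qmap_apply_zero, hn0]
  refine ⟨hsurj, ?_⟩
  rw [L.toLinearMap.finrank_ker_eq_sub_of_surjective hsurj, Module.finrank_prod,
    Module.finrank_fin_fun, Module.finrank_fin_fun]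
  omega
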